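/- Let 0 ≤ s < t ≤ M with M ≥ 1, and let exponents satisfy 0 < m♭ ≤ 1 ≤ m♯. If t^{m♯} − s^{m♯} ≥ λ > 0, then t^{m♭} − s^{m♭} ≥ (m♭/m♯) · M^{m♭ − m♯} · min{λ, λ^{m♭/m♯}}. -/

import Mathlib

/-!
Put `θ = m♭/m♯ ∈ (0, 1]`. Concavity of `x ↦ x ^ θ` bounds `b ^ θ - a ^ θ` below by the tangent
slope at the right end point times `b - a`; for `a = s ^ m♯`, `b = t ^ m♯` this reads
`t ^ m♭ - s ^ m♭ ≥ θ t ^ (m♭ - m♯) (t ^ m♯ - s ^ m♯)`. Finally `t ^ (m♭ - m♯) ≥ M ^ (m♭ - m♯)` as the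
exponent is nonpositive, and `t ^ m♯ - s ^ m♯ ≥ λ ≥ min {λ, λ ^ θ}`.
-/

namespace Real

theorem mul_rpow_sub_one_mul_sub_le_rpow_sub_rpow {a b p : ℝ} (ha : 0 ≤ a) (hab : a ≤ b)
    (hp₀ : 0 ≤ p) (hp₁ : p ≤ 1) : p * b ^ (p - 1) * (b - a) ≤ b ^ p - a ^ p := by
  rcases (ha.trans hab).eq_or_lt with rfl | hb
  · obtain rfl : a = 0 := le_antisymm hab ha
    simp
  -- Bernoulli's inequality `(1 + x) ^ p ≤ 1 + p x` at `x = a / b - 1`, rescaled by `b ^ p`.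
  have hbernoulli : (a / b) ^ p ≤ 1 + p * (a / b - 1) := by
    simpa using rpow_one_add_le_one_add_mul_self (s := a / b - 1)
      (by linarith [div_nonneg ha hb.le]) hp₀ hp₁
  have hbp : b ^ p = b ^ (p - 1) * b := by
    rw [← rpow_add_one hb.ne', sub_add_cancel]
  rw [div_rpow ha hb.le, div_le_iff₀ (rpow_pos_of_pos hb p)] at hbernoulli
  have : (1 + p * (a / b - 1)) * b ^ p = b ^ p - p * b ^ (p - 1) * (b - a) := by
    rw [hbp]; field_simp; ring
  linarith

theorem div_mul_rpow_sub_mul_rpow_sub_rpow_le {s t p q : ℝ} (hs : 0 ≤ s) (hst : s ≤ t)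
    (hp : 0 ≤ p) (hpq : p ≤ q) :
    p / q * t ^ (p - q) * (t ^ q - s ^ q) ≤ t ^ p - s ^ p := by
  rcases hp.eq_or_lt with rfl | hp
  · simp
  have hq : 0 < q := hp.trans_le hpq
  have ht : 0 ≤ t := hs.trans hst
  have hpow {x : ℝ} (hx : 0 ≤ x) (r : ℝ) : (x ^ q) ^ r = x ^ (q * r) := (rpow_mul hx q r).symm
  have key := mul_rpow_sub_one_mul_sub_le_rpow_sub_rpow (rpow_nonneg hs q)
    (rpow_le_rpow hs hst hq.le) (div_nonneg hp.le hq.le) ((div_le_one hq).2 hpq) (p := p / q)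
  have hexp : q * (p / q - 1) = p - q := by field_simp
  rwa [hpow ht, hpow ht, hpow hs, hexp, mul_div_cancel₀ _ hq.ne'] at key

end Real

theorem stmt_1_general (s t M lam mb ms : ℝ) (hs : 0 ≤ s) (hst : s < t) (htM : t ≤ M)
    (hmb : 0 < mb) (hmb1 : mb ≤ 1) (hms : 1 ≤ ms)
    (h : lam ≤ t ^ ms - s ^ ms) :
    mb / ms * M ^ (mb - ms) * min lam (lam ^ (mb / ms)) ≤ t ^ mb - s ^ mb := by
  have ht : 0 < t := hs.trans_lt hst
  have hmbms : mb ≤ ms := hmb1.trans hms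
  have hgap : 0 ≤ t ^ ms - s ^ ms :=
    sub_nonneg.2 (Real.rpow_le_rpow hs hst.le (by linarith))
  have hMpow : 0 ≤ M ^ (mb - ms) := Real.rpow_nonneg (ht.le.trans htM) _
  calc mb / ms * M ^ (mb - ms) * min lam (lam ^ (mb / ms))
      ≤ mb / ms * M ^ (mb - ms) * (t ^ ms - s ^ ms) :=
        mul_le_mul_of_nonneg_left ((min_le_left _ _).trans h) (mul_nonneg (by positivity) hMpow)
    _ ≤ mb / ms * t ^ (mb - ms) * (t ^ ms - s ^ ms) := by
        gcongr _ * ?_ * _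
        exact Real.rpow_le_rpow_of_nonpos ht htM (by linarith)
    _ ≤ t ^ mb - s ^ mb :=
        Real.div_mul_rpow_sub_mul_rpow_sub_rpow_le hs hst.le hmb.le hmbms

/-- If `0 ≤ s < t ≤ M`, `M ≥ 1`, `0 < m♭ ≤ 1 ≤ m♯`, and
`t^m♯ − s^m♯ ≥ λ > 0`, then `t^m♭ − s^m♭ ≥ (m♭/m♯) M^(m♭−m♯) min{λ, λ^(m♭/m♯)}`. -/
theorem stmt_1 (s t M lam mb ms : ℝ) (hs : 0 ≤ s) (hst : s < t) (htM : t ≤ M)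
    (hM : 1 ≤ M) (hmb : 0 < mb) (hmb1 : mb ≤ 1) (hms : 1 ≤ ms) (hlam : 0 < lam)
    (h : lam ≤ t ^ ms - s ^ ms) :
    mb / ms * M ^ (mb - ms) * min lam (lam ^ (mb / ms)) ≤ t ^ mb - s ^ mb :=
  stmt_1_general s t M lam mb ms hs hst htM hmb hmb1 hms h
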